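/- Let (V,⟨·,·,·⟩,θ) be a multiplicative Hom-Jordan supertriple system. Define [x,y,z] := ⟨x,y,z⟩ - (-1)^{|x||y|}⟨y,x,z⟩. Then (V,[·,·,·],θ) is a multiplicative Hom-Lie supertriple system: [x,y,z] = -(-1)^{|x||y|}[y,x,z], the graded cyclic sum of [x,y,z] vanishes, and [θ(x),θ(y),[u,v,w]] = [[x,y,u],θ(v),θ(w)] + (-1)^{|u|(|x|+|y|)}[θ(u),[x,y,v],θ(w)] + (-1)^{(|x|+|y|)(|u|+|v|)}[θ(u),θ(v),[x,y,w]]. -/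
import Mathlib


def sgn (K : Type*) [Field K] (i j : ZMod 2) : K := (-1 : K) ^ (i * j).val

def IsBilin (K : Type*) {A : Type*} [Field K] [AddCommGroup A] [Module K A]
    (f : A → A → A) : Prop :=
  (∀ (c : K) (x y : A), f (c • x) y = c • f x y) ∧
  (∀ x x' y : A, f (x + x') y = f x y + f x' y) ∧
  (∀ (c : K) (x y : A), f x (c • y) = c • f x y) ∧
  (∀ x y y' : A, f x (y + y') = f x y + f x y')

def IsTrilin (K : Type*) {A : Type*} [Field K] [AddCommGroup A] [Module K A]
    (f : A → A → A → A) : Prop :=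
  (∀ (c : K) (x y z : A), f (c • x) y z = c • f x y z) ∧
  (∀ x x' y z : A, f (x + x') y z = f x y z + f x' y z) ∧
  (∀ (c : K) (x y z : A), f x (c • y) z = c • f x y z) ∧
  (∀ x y y' z : A, f x (y + y') z = f x y z + f x y' z) ∧
  (∀ (c : K) (x y z : A), f x y (c • z) = c • f x y z) ∧
  (∀ x y z z' : A, f x y (z + z') = f x y z + f x y z')

def asc {A : Type*} [AddCommGroup A] (mul : A → A → A) (x y z : A) : A :=
  mul (mul x y) z - mul x (mul y z)

def hasc {A : Type*} [AddCommGroup A] (mul : A → A → A) (α : A → A) (x y z : A) : A :=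
  mul (mul x y) (α z) - mul (α x) (mul y z)

def br (K : Type*) {A : Type*} [Field K] [AddCommGroup A] [Module K A]
    (mul : A → A → A) (i j : ZMod 2) (x y : A) : A :=
  (2 : K)⁻¹ • (mul x y - sgn K i j • mul y x)

def jp (K : Type*) {A : Type*} [Field K] [AddCommGroup A] [Module K A]
    (mul : A → A → A) (i j : ZMod 2) (x y : A) : A :=
  (2 : K)⁻¹ • (mul x y + sgn K i j • mul y x)

/-- A multiplicative Hom-Jordan supertriple system structure. -/
structure IsHomJTS (K : Type*) {V : Type*} [Field K] [AddCommGroup V] [Module K V]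
    (𝒱 : ZMod 2 → Submodule K V) (T : V → V → V → V) (θ : V → V) : Prop where
  trilin : IsTrilin K T
  grade : ∀ (i j k : ZMod 2) (x y z : V),
    x ∈ 𝒱 i → y ∈ 𝒱 j → z ∈ 𝒱 k → T x y z ∈ 𝒱 (i + j + k)
  theta_smul : ∀ (c : K) (x : V), θ (c • x) = c • θ x
  theta_add : ∀ x y : V, θ (x + y) = θ x + θ y
  theta_even : ∀ (i : ZMod 2) (x : V), x ∈ 𝒱 i → θ x ∈ 𝒱 i
  mult : ∀ x y z : V, θ (T x y z) = T (θ x) (θ y) (θ z)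
  outer : ∀ (i j k : ZMod 2) (x y z : V), x ∈ 𝒱 i → y ∈ 𝒱 j → z ∈ 𝒱 k →
    T x y z = (sgn K i j * sgn K i k * sgn K j k) • T z y x
  hjts : ∀ (i j p q r : ZMod 2) (x y u v w : V),
    x ∈ 𝒱 i → y ∈ 𝒱 j → u ∈ 𝒱 p → v ∈ 𝒱 q → w ∈ 𝒱 r →
    T (θ x) (θ y) (T u v w) - T (T x y u) (θ v) (θ w)
      = sgn K (i + j) (p + q) •
          (T (θ u) (θ v) (T x y w) - T (θ u) (T v x y) (θ w))

/-- The ternary bracket `[x,y,z] = ⟨x,y,z⟩ - (-1)^{|x||y|} ⟨y,x,z⟩` for `x,y`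
homogeneous of degrees `i,j`. -/
def Lb (K : Type*) {V : Type*} [Field K] [AddCommGroup V] [Module K V]
    (T : V → V → V → V) (i j : ZMod 2) (x y z : V) : V :=
  T x y z - sgn K i j • T y x z


lemma sgn_pm (K : Type*) [Field K] (i j : ZMod 2) : sgn K i j = 1 ∨ sgn K i j = -1 := by
  have h2 : (i * j).val < 2 := ZMod.val_lt _
  have h : (i * j).val = 0 ∨ (i * j).val = 1 := by omega
  rcases h with h | h
  · left; simp [sgn, h]
  · right; simp [sgn, h]

lemma sgn_comm (K : Type*) [Field K] (i j : ZMod 2) : sgn K i j = sgn K j i := by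
  rw [sgn, sgn, mul_comm]

lemma neg_one_pow_val_add (K : Type*) [Field K] (a b : ZMod 2) :
    ((-1 : K)) ^ (a + b).val = (-1 : K) ^ a.val * (-1 : K) ^ b.val := by
  rw [ZMod.val_add]
  have ha : a.val = 0 ∨ a.val = 1 := by have := ZMod.val_lt a; omega
  have hb : b.val = 0 ∨ b.val = 1 := by have := ZMod.val_lt b; omega
  rcases ha with h | h <;> rcases hb with h' | h' <;> rw [h, h'] <;> norm_num

lemma sgn_add_right (K : Type*) [Field K] (i j k : ZMod 2) :
    sgn K i (j + k) = sgn K i j * sgn K i k := by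
  rw [sgn, sgn, sgn, mul_add, neg_one_pow_val_add]

lemma sgn_add_left (K : Type*) [Field K] (i j k : ZMod 2) :
    sgn K (i + j) k = sgn K i k * sgn K j k := by
  rw [sgn, sgn, sgn, add_mul, neg_one_pow_val_add]

set_option maxHeartbeats 4000000 in
/-- Theorem 7.2: a multiplicative Hom-Jordan supertriple system gives a
multiplicative Hom-Lie supertriple system under
`[x,y,z] := ⟨x,y,z⟩ - (-1)^{|x||y|}⟨y,x,z⟩`. -/
theorem stmt16 {K V : Type*} [Field K] [AddCommGroup V] [Module K V]
    (h2 : (2 : K) ≠ 0) (h3 : (3 : K) ≠ 0)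
    (𝒱 : ZMod 2 → Submodule K V) (hds : DirectSum.IsInternal 𝒱)
    (T : V → V → V → V) (θ : V → V)
    (hJ : IsHomJTS K 𝒱 T θ) :
    -- multiplicativity
    (∀ (i j : ZMod 2) (x y z : V),
      θ (Lb K T i j x y z) = Lb K T i j (θ x) (θ y) (θ z)) ∧
    -- superskewsymmetry in the first two slots
    (∀ (i j k : ZMod 2) (x y z : V), x ∈ 𝒱 i → y ∈ 𝒱 j → z ∈ 𝒱 k →
      Lb K T i j x y z = (-(sgn K i j)) • Lb K T j i y x z) ∧
    -- vanishing of the graded cyclic sum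
    (∀ (i j k : ZMod 2) (x y z : V), x ∈ 𝒱 i → y ∈ 𝒱 j → z ∈ 𝒱 k →
      Lb K T i j x y z + sgn K i (j + k) • Lb K T j k y z x
        + sgn K k (i + j) • Lb K T k i z x y = 0) ∧
    -- θ-twisted ternary derivation identity
    (∀ (i j p q r : ZMod 2) (x y u v w : V),
      x ∈ 𝒱 i → y ∈ 𝒱 j → u ∈ 𝒱 p → v ∈ 𝒱 q → w ∈ 𝒱 r →
      Lb K T i j (θ x) (θ y) (Lb K T p q u v w)
        = Lb K T (i + j + p) q (Lb K T i j x y u) (θ v) (θ w)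
          + sgn K p (i + j) • Lb K T p (i + j + q) (θ u) (Lb K T i j x y v) (θ w)
          + sgn K (i + j) (p + q) • Lb K T p q (θ u) (θ v) (Lb K T i j x y w)) := by
  obtain ⟨t1s, t1a, t2s, t2a, t3s, t3a⟩ := hJ.trilin
  have e1 : ∀ (a b c d : V) (s : K), T (a - s • b) c d = T a c d - s • T b c d := by
    intro a b c d s
    rw [sub_eq_add_neg, ← neg_smul, t1a, t1s, neg_smul, ← sub_eq_add_neg]
  have e2 : ∀ (a b c d : V) (s : K), T c (a - s • b) d = T c a d - s • T c b d := by
    intro a b c d s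
    rw [sub_eq_add_neg, ← neg_smul, t2a, t2s, neg_smul, ← sub_eq_add_neg]
  have e3 : ∀ (a b c d : V) (s : K), T c d (a - s • b) = T c d a - s • T c d b := by
    intro a b c d s
    rw [sub_eq_add_neg, ← neg_smul, t3a, t3s, neg_smul, ← sub_eq_add_neg]
  refine ⟨?_, ?_, ?_, ?_⟩
  · intro i j x y z
    have θsub : ∀ a b : V, θ (a - b) = θ a - θ b := by
      intro a b
      rw [sub_eq_add_neg, hJ.theta_add, ← neg_one_smul K b, hJ.theta_smul,
        neg_one_smul, ← sub_eq_add_neg]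
    simp only [Lb]
    rw [θsub, hJ.theta_smul, hJ.mult, hJ.mult]
  · intro i j k x y z hx hy hz
    simp only [Lb]
    rw [sgn_comm K j i]
    rcases sgn_pm K i j with h | h <;> rw [h] <;> module
  · intro i j k x y z hx hy hz
    have O1 := hJ.outer j k i y z x hy hz hx
    have O2 := hJ.outer k j i z y x hz hy hx
    have O3 := hJ.outer k i j z x y hz hx hy
    simp only [Lb]
    rw [O1, O2, O3]
    simp only [sgn_add_right, sgn_add_left]
    simp only [sgn_comm K j i, sgn_comm K k i, sgn_comm K k j]
    rcases sgn_pm K i j with h1 | h1 <;> rcases sgn_pm K i k with h2 | h2 <;>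
      rcases sgn_pm K j k with h3 | h3 <;> simp only [h1, h2, h3] <;> module
  · intro i j p q r x y u v w hx hy hu hv hw
    have H1 := eq_add_of_sub_eq (hJ.hjts i j p q r x y u v w hx hy hu hv hw)
    have H2 := eq_add_of_sub_eq (hJ.hjts j i p q r y x u v w hy hx hu hv hw)
    have H3 := eq_add_of_sub_eq (hJ.hjts i j q p r x y v u w hx hy hv hu hw)
    have H4 := eq_add_of_sub_eq (hJ.hjts j i q p r y x v u w hy hx hv hu hw)
    have N1 : T (θ u) (T v x y) (θ w)
        = (sgn K q i * sgn K q j * sgn K i j) • T (θ u) (T y x v) (θ w) := by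
      rw [hJ.outer q i j v x y hv hx hy, t2s]
    have N2 : T (θ u) (T v y x) (θ w)
        = (sgn K q j * sgn K q i * sgn K j i) • T (θ u) (T x y v) (θ w) := by
      rw [hJ.outer q j i v y x hv hy hx, t2s]
    have N3 : T (θ v) (T u x y) (θ w)
        = (sgn K p i * sgn K p j * sgn K i j) • T (θ v) (T y x u) (θ w) := by
      rw [hJ.outer p i j u x y hu hx hy, t2s]
    have N4 : T (θ v) (T u y x) (θ w)
        = (sgn K p j * sgn K p i * sgn K j i) • T (θ v) (T x y u) (θ w) := by
      rw [hJ.outer p j i u y x hu hy hx, t2s]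
    simp only [Lb, e1, e2, e3]
    rw [H1, H2, H3, H4, N1, N2, N3, N4]
    simp only [sgn_add_right, sgn_add_left]
    simp only [sgn_comm K j i, sgn_comm K p i, sgn_comm K p j, sgn_comm K q i,
      sgn_comm K q j, sgn_comm K q p]
    rcases sgn_pm K i j with h1 | h1 <;> rcases sgn_pm K i p with h2 | h2 <;>
      rcases sgn_pm K i q with h3 | h3 <;> rcases sgn_pm K j p with h4 | h4 <;>
      rcases sgn_pm K j q with h5 | h5 <;> rcases sgn_pm K p q with h6 | h6 <;>
      simp only [h1, h2, h3, h4, h5, h6] <;> module
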